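/- Let ℓ, λ, λ' be naturals with λ + 1 < ℓ and λ < λ' < ℓ, let ξ be a natural with 2^{λ−1} ≤ ξ < 2^λ, and let R be any natural with R < 2^ℓ. For each j < ℓ, let t_j be the unique natural in [0, 2^{ℓ−j}) congruent to ⌊((ξ+R) mod 2^ℓ)/2^j⌋ − ⌊R/2^j⌋ modulo 2^{ℓ−j}, and let t'_j be the unique natural in [0, 2^{ℓ−j}) congruent to ⌊((2^ℓ − ξ + R) mod 2^ℓ)/2^j⌋ − ⌊R/2^j⌋ modulo 2^{ℓ−j}. Then: (i) if t_{λ'−1} = 0, then t_{λ'} = 0; and (ii) if t'_{λ'−1} = 0, then t'_{λ'} = 0. -/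
import Mathlib

private lemma int_eq_of_modeq {n a b : ℤ} (h : Int.ModEq n a b)
    (ha : 0 ≤ a) (ha' : a < n) (hb : 0 ≤ b) (hb' : b < n) : a = b := by
  have h2 : a % n = b % n := h
  rwa [Int.emod_eq_of_lt ha ha', Int.emod_eq_of_lt hb hb'] at h2

private lemma mod_div_modeq (a ℓ j : ℕ) (hj : j ≤ ℓ) :
    (a % 2 ^ ℓ) / 2 ^ j ≡ a / 2 ^ j [MOD 2 ^ (ℓ - j)] := by
  have h2 : (2:ℕ) ^ ℓ = 2 ^ j * 2 ^ (ℓ - j) := by rw [← pow_add]; congr 1; omega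
  have key : a / 2 ^ j = (a % 2 ^ ℓ) / 2 ^ j + 2 ^ (ℓ - j) * (a / 2 ^ ℓ) := by
    conv_lhs => rw [← Nat.mod_add_div a (2 ^ ℓ)]
    rw [show a % 2 ^ ℓ + 2 ^ ℓ * (a / 2 ^ ℓ)
      = a % 2 ^ ℓ + (2 ^ (ℓ - j) * (a / 2 ^ ℓ)) * 2 ^ j by rw [h2]; ring]
    rw [Nat.add_mul_div_right _ _ (by positivity : (0:ℕ) < 2 ^ j)]
  rw [key]
  simpa [Nat.ModEq] using (Nat.add_mul_mod_self_left _ _ _).symm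

private lemma pos_char (ℓ lam j ξ R tj : ℕ) (hj1 : lam ≤ j) (hj2 : j < ℓ)
    (hξ : ξ < 2 ^ lam) (htlt : tj < 2 ^ (ℓ - j))
    (hc : Int.ModEq (2 ^ (ℓ - j)) (tj : ℤ)
      ((((ξ + R) % 2 ^ ℓ / 2 ^ j : ℕ) : ℤ) - ((R / 2 ^ j : ℕ) : ℤ))) :
    tj = if 2 ^ j ≤ ξ + R % 2 ^ j then 1 else 0 := by
  have hξj : ξ < 2 ^ j := lt_of_lt_of_le hξ (Nat.pow_le_pow_right (by norm_num) hj1)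
  have hm : Nat.ModEq (2 ^ (ℓ - j)) ((ξ + R) % 2 ^ ℓ / 2 ^ j) ((ξ + R) / 2 ^ j) :=
    mod_div_modeq (ξ + R) ℓ j hj2.le
  have hmi : Int.ModEq (2 ^ (ℓ - j)) ((((ξ + R) % 2 ^ ℓ / 2 ^ j : ℕ) : ℤ))
      ((((ξ + R) / 2 ^ j : ℕ) : ℤ)) := by
    have := Int.natCast_modEq_iff.mpr hm
    exact_mod_cast this
  have hm' : Int.ModEq (2 ^ (ℓ - j)) (tj : ℤ)
      ((((ξ + R) / 2 ^ j : ℕ) : ℤ) - ((R / 2 ^ j : ℕ) : ℤ)) :=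
    hc.trans (hmi.sub (Int.ModEq.refl _))
  have h1lt : (1 : ℤ) < 2 ^ (ℓ - j) := by
    calc (1:ℤ) < 2 ^ 1 := by norm_num
    _ ≤ 2 ^ (ℓ - j) := pow_le_pow_right₀ (by norm_num) (by omega)
  have hdiv : (ξ + R) / 2 ^ j = R / 2 ^ j + (if 2 ^ j ≤ ξ + R % 2 ^ j then 1 else 0) := by
    rw [Nat.add_div (by positivity : (0:ℕ) < 2 ^ j), Nat.div_eq_of_lt hξj,
      Nat.mod_eq_of_lt hξj]
    ring
  by_cases hcc : 2 ^ j ≤ ξ + R % 2 ^ j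
  · rw [if_pos hcc]
    rw [hdiv, if_pos hcc] at hm'
    have heq : (((R / 2 ^ j + 1 : ℕ)) : ℤ) - ((R / 2 ^ j : ℕ) : ℤ) = 1 := by push_cast; ring
    rw [heq] at hm'
    have := int_eq_of_modeq hm' (by positivity) (by exact_mod_cast htlt)
      (by norm_num) h1lt
    exact_mod_cast this
  · rw [if_neg hcc]
    rw [hdiv, if_neg hcc] at hm'
    have heq : (((R / 2 ^ j + 0 : ℕ)) : ℤ) - ((R / 2 ^ j : ℕ) : ℤ) = 0 := by push_cast; ring
    rw [heq] at hm'
    have := int_eq_of_modeq hm' (by positivity) (by exact_mod_cast htlt)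
      (le_refl 0) (by positivity)
    exact_mod_cast this

private lemma neg_char (ℓ lam j ξ R tj : ℕ) (hj1 : lam ≤ j) (hj2 : j < ℓ)
    (hξ : ξ < 2 ^ lam) (htlt : tj < 2 ^ (ℓ - j))
    (hc : Int.ModEq (2 ^ (ℓ - j)) (tj : ℤ)
      ((((2 ^ ℓ - ξ + R) % 2 ^ ℓ / 2 ^ j : ℕ) : ℤ) - ((R / 2 ^ j : ℕ) : ℤ))) :
    tj = if ξ ≤ R % 2 ^ j then 0 else 2 ^ (ℓ - j) - 1 := by
  have hξj : ξ < 2 ^ j := lt_of_lt_of_le hξ (Nat.pow_le_pow_right (by norm_num) hj1)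
  have hjl : (2:ℕ) ^ j ≤ 2 ^ ℓ := Nat.pow_le_pow_right (by norm_num) hj2.le
  have h2 : (2:ℕ) ^ ℓ = 2 ^ j * 2 ^ (ℓ - j) := by rw [← pow_add]; congr 1; omega
  have hR' := Nat.div_add_mod R (2 ^ j)
  have hposj : (0:ℕ) < 2 ^ j := by positivity
  have hposlj : (0:ℕ) < 2 ^ (ℓ - j) := by positivity
  have hrlt : R % 2 ^ j < 2 ^ j := Nat.mod_lt _ hposj
  have hm : Nat.ModEq (2 ^ (ℓ - j)) ((2 ^ ℓ - ξ + R) % 2 ^ ℓ / 2 ^ j)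
      ((2 ^ ℓ - ξ + R) / 2 ^ j) := mod_div_modeq _ ℓ j hj2.le
  have hmi : Int.ModEq (2 ^ (ℓ - j)) ((((2 ^ ℓ - ξ + R) % 2 ^ ℓ / 2 ^ j : ℕ) : ℤ))
      ((((2 ^ ℓ - ξ + R) / 2 ^ j : ℕ) : ℤ)) := by
    have := Int.natCast_modEq_iff.mpr hm
    exact_mod_cast this
  have hm' : Int.ModEq (2 ^ (ℓ - j)) (tj : ℤ)
      ((((2 ^ ℓ - ξ + R) / 2 ^ j : ℕ) : ℤ) - ((R / 2 ^ j : ℕ) : ℤ)) :=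
    hc.trans (hmi.sub (Int.ModEq.refl _))
  by_cases hcase : ξ ≤ R % 2 ^ j
  · rw [if_pos hcase]
    have e1 : ((2:ℕ) ^ (ℓ - j) + R / 2 ^ j) * 2 ^ j
        = 2 ^ (ℓ - j) * 2 ^ j + R / 2 ^ j * 2 ^ j := add_mul _ _ _
    have e2 : (2:ℕ) ^ (ℓ - j) * 2 ^ j = 2 ^ ℓ := by rw [← pow_add]; congr 1; omega
    have e3 := Nat.div_add_mod' R (2 ^ j)
    have heq : 2 ^ ℓ - ξ + R = (R % 2 ^ j - ξ) + (2 ^ (ℓ - j) + R / 2 ^ j) * 2 ^ j := by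
      rw [e1, e2]; omega
    have hdiv : (2 ^ ℓ - ξ + R) / 2 ^ j = 2 ^ (ℓ - j) + R / 2 ^ j := by
      rw [heq, Nat.add_mul_div_right _ _ hposj, Nat.div_eq_of_lt (by omega), Nat.zero_add]
    rw [hdiv] at hm'
    have heq2 : (((2 ^ (ℓ - j) + R / 2 ^ j : ℕ)) : ℤ) - ((R / 2 ^ j : ℕ) : ℤ)
        = 2 ^ (ℓ - j) := by push_cast; ring
    rw [heq2] at hm'
    have hfin : Int.ModEq (2 ^ (ℓ - j)) (tj : ℤ) 0 :=
      hm'.trans (Int.modEq_iff_dvd.mpr (by simp))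
    have := int_eq_of_modeq hfin (by positivity) (by exact_mod_cast htlt)
      (le_refl 0) (by positivity)
    exact_mod_cast this
  · rw [if_neg hcase]
    have e1 : ((2:ℕ) ^ (ℓ - j) - 1 + R / 2 ^ j) * 2 ^ j
        = (2 ^ (ℓ - j) - 1) * 2 ^ j + R / 2 ^ j * 2 ^ j := add_mul _ _ _
    have e1' : ((2:ℕ) ^ (ℓ - j) - 1) * 2 ^ j = 2 ^ (ℓ - j) * 2 ^ j - 2 ^ j := by
      rw [Nat.sub_mul, one_mul]
    have e2 : (2:ℕ) ^ (ℓ - j) * 2 ^ j = 2 ^ ℓ := by rw [← pow_add]; congr 1; omega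
    have e3 := Nat.div_add_mod' R (2 ^ j)
    have heq : 2 ^ ℓ - ξ + R
        = (2 ^ j + R % 2 ^ j - ξ) + (2 ^ (ℓ - j) - 1 + R / 2 ^ j) * 2 ^ j := by
      rw [e1, e1', e2]; omega
    have hdiv : (2 ^ ℓ - ξ + R) / 2 ^ j = 2 ^ (ℓ - j) - 1 + R / 2 ^ j := by
      rw [heq, Nat.add_mul_div_right _ _ hposj, Nat.div_eq_of_lt (by omega), Nat.zero_add]
    rw [hdiv] at hm'
    have heq2 : (((2 ^ (ℓ - j) - 1 + R / 2 ^ j : ℕ)) : ℤ) - ((R / 2 ^ j : ℕ) : ℤ)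
        = ((2 ^ (ℓ - j) - 1 : ℕ) : ℤ) := by rw [Nat.cast_add, add_sub_cancel_right]
    rw [heq2] at hm'
    have := int_eq_of_modeq hm' (by positivity) (by exact_mod_cast htlt)
      (by positivity) (by exact_mod_cast Nat.sub_lt hposlj (by norm_num))
    exact_mod_cast this

/-- beyond the effective bit length, once the truncation value
is 0 it stays 0. -/
theorem stmt_19 (ℓ lam lam' : ℕ) (h : lam + 1 < ℓ) (h1 : lam < lam') (h2 : lam' < ℓ)
    (ξ : ℕ) (hξ1 : 2 ^ (lam - 1) ≤ ξ) (hξ2 : ξ < 2 ^ lam)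
    (R : ℕ) (hR : R < 2 ^ ℓ) (t t' : ℕ → ℕ)
    (ht1 : ∀ j < ℓ, t j < 2 ^ (ℓ - j))
    (ht2 : ∀ j < ℓ, Int.ModEq (2 ^ (ℓ - j)) (t j : ℤ)
      ((((ξ + R) % 2 ^ ℓ / 2 ^ j : ℕ) : ℤ) - ((R / 2 ^ j : ℕ) : ℤ)))
    (ht'1 : ∀ j < ℓ, t' j < 2 ^ (ℓ - j))
    (ht'2 : ∀ j < ℓ, Int.ModEq (2 ^ (ℓ - j)) (t' j : ℤ)
      ((((2 ^ ℓ - ξ + R) % 2 ^ ℓ / 2 ^ j : ℕ) : ℤ) - ((R / 2 ^ j : ℕ) : ℤ))) :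
    (t (lam' - 1) = 0 → t lam' = 0) ∧
    (t' (lam' - 1) = 0 → t' lam' = 0) := by
  have hj1a : lam ≤ lam' - 1 := by omega
  have hj2a : lam' - 1 < ℓ := by omega
  have hj1b : lam ≤ lam' := by omega
  have hmm : R % 2 ^ lam' % 2 ^ (lam' - 1) = R % 2 ^ (lam' - 1) :=
    Nat.mod_mod_of_dvd _ (pow_dvd_pow 2 (by omega))
  have hsplit := Nat.div_add_mod (R % 2 ^ lam') (2 ^ (lam' - 1))
  have hqlt : R % 2 ^ lam' / 2 ^ (lam' - 1) < 2 := by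
    apply Nat.div_lt_of_lt_mul
    calc R % 2 ^ lam' < 2 ^ lam' := Nat.mod_lt _ (by positivity)
    _ = 2 ^ (lam' - 1) * 2 := by rw [← pow_succ]; congr 1; omega
  have hq1 : R % 2 ^ lam' / 2 ^ (lam' - 1) ≤ 1 := by omega
  have hble : 2 ^ (lam' - 1) * (R % 2 ^ lam' / 2 ^ (lam' - 1)) ≤ 2 ^ (lam' - 1) * 1 :=
    Nat.mul_le_mul (le_refl _) hq1
  have hRle : R % 2 ^ lam' ≤ 2 ^ (lam' - 1) + R % 2 ^ (lam' - 1) := by omega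
  have hRge : R % 2 ^ (lam' - 1) ≤ R % 2 ^ lam' := hmm ▸ Nat.mod_le _ _
  have hA := pos_char ℓ lam (lam' - 1) ξ R (t (lam' - 1)) hj1a hj2a hξ2
    (ht1 _ hj2a) (ht2 _ hj2a)
  have hB := pos_char ℓ lam lam' ξ R (t lam') hj1b h2 hξ2 (ht1 _ h2) (ht2 _ h2)
  have hA' := neg_char ℓ lam (lam' - 1) ξ R (t' (lam' - 1)) hj1a hj2a hξ2
    (ht'1 _ hj2a) (ht'2 _ hj2a)
  have hB' := neg_char ℓ lam lam' ξ R (t' lam') hj1b h2 hξ2 (ht'1 _ h2) (ht'2 _ h2)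
  have hpow : (2:ℕ) ^ lam' = 2 ^ (lam' - 1) * 2 := by rw [← pow_succ]; congr 1; omega
  constructor
  · intro h0
    rw [hA] at h0
    rw [hB]
    by_cases hc1 : 2 ^ (lam' - 1) ≤ ξ + R % 2 ^ (lam' - 1)
    · rw [if_pos hc1] at h0; exact absurd h0 one_ne_zero
    · rw [if_neg (by omega)]
  · intro h0
    rw [hA'] at h0
    rw [hB']
    by_cases hc1 : ξ ≤ R % 2 ^ (lam' - 1)
    · rw [if_pos (by omega)]
    · rw [if_neg hc1] at h0
      have h2lt : 2 ≤ 2 ^ (ℓ - (lam' - 1)) := by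
        calc (2:ℕ) = 2 ^ 1 := by norm_num
        _ ≤ 2 ^ (ℓ - (lam' - 1)) := Nat.pow_le_pow_right (by norm_num) (by omega)
      omega
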